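/- In the metric product X = H² × ℝ, for points (x,a) and (y,b), the distance satisfies dist((x,a),(y,b)) = sqrt(d_{H²}(x,y)² + (a − b)²), and for a right geodesic triangle in X with right angle at a vertex p, legs of lengths l (contained in H² × {0}) and d (making angle α with the horizontal at p, i.e., with vertical component d sin α), the hypotenuse h satisfies cosh h ≤ cosh l · cosh d, with strict inequality if sin α > 0, d > 0 and l > 0. -/

import Mathlib

/-!
Write `k = cosh l`, `c = d cos α`, `s = d sin α`, so that `d² = c² + s²`, and let `A`, `B ≥ 0` be
given by `cosh A = k cosh c`, `cosh B = k cosh d`. As `cosh` is increasing on `[0, ∞)`, the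
inequality reads `A² + s² ≤ B²`, i.e. `A² - c² ≤ B² - d²`. For `G y = arcosh (exp y) ^ 2` we have
`t² = G (log cosh t)`, `A² = G (log cosh c + log k)` and `B² = G (log cosh d + log k)`, so this is
the increasing-differences property of `G`. It holds because `G` is strictly convex: its
derivative at `log cosh x` is `2 x coth x`, which is strictly increasing in `x`.
-/

open UpperHalfPlane

noncomputable def arcosh (x : ℝ) : ℝ := Real.log (x + Real.sqrt (x ^ 2 - 1))

theorem WithLp.prod_dist_eq_sqrt {α β : Type*} [PseudoMetricSpace α] [PseudoMetricSpace β]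
    (f g : WithLp 2 (α × β)) : dist f g = √(dist f.fst g.fst ^ 2 + dist f.snd g.snd ^ 2) := by
  rw [WithLp.prod_dist_eq_add (by norm_num), Real.sqrt_eq_rpow]
  norm_num

theorem arcosh_eq_real_arcosh : arcosh = Real.arcosh := by
  funext x
  unfold Real.arcosh
  rfl

section

open Real Set

theorem strictMonoOn_mul_cosh_div_sinh : StrictMonoOn (fun x => x * cosh x / sinh x) (Ioi 0) := by
  apply strictMonoOn_of_deriv_pos (convex_Ioi 0)
  · exact ContinuousOn.div (by fun_prop) (by fun_prop) fun x hx => (sinh_pos_iff.2 hx).ne'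
  · rw [interior_Ioi]
    intro x (hx : 0 < x)
    have hsinh : 0 < sinh x := sinh_pos_iff.2 hx
    have hderiv : HasDerivAt (fun x => x * cosh x / sinh x)
        (((1 * cosh x + x * sinh x) * sinh x - x * cosh x * cosh x) / sinh x ^ 2) x :=
      ((hasDerivAt_id' x).mul (hasDerivAt_cosh x)).div (hasDerivAt_sinh x) hsinh.ne'
    rw [hderiv.deriv]
    -- `sinh x cosh x = sinh (2x) / 2 > x`
    have hnum : 0 < sinh x * cosh x - x := by
      have := self_lt_sinh_iff.2 (by linarith : 0 < 2 * x)
      rw [sinh_two_mul] at this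
      linarith
    have e : (1 * cosh x + x * sinh x) * sinh x - x * cosh x * cosh x = sinh x * cosh x - x := by
      linear_combination (-x) * cosh_sq x
    rw [e]
    positivity

theorem hasDerivAt_sq_arcosh_exp {y : ℝ} (hy : 0 < y) :
    HasDerivAt (fun y => Real.arcosh (exp y) ^ 2)
      (2 * (Real.arcosh (exp y) * cosh (Real.arcosh (exp y)) / sinh (Real.arcosh (exp y)))) y := by
  have hexp : 1 < exp y := one_lt_exp_iff.2 hy
  rw [cosh_arcosh hexp.le, sinh_arcosh hexp.le]
  refine ((hasDerivAt_pow 2 _).comp y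
    ((hasDerivAt_arcosh hexp).comp y (hasDerivAt_exp y))).congr_deriv ?_
  simp only [Function.comp_apply]
  ring

theorem strictConvexOn_sq_arcosh_exp :
    StrictConvexOn ℝ (Ici 0) (fun y => Real.arcosh (exp y) ^ 2) := by
  apply StrictMonoOn.strictConvexOn_of_deriv (convex_Ici 0)
  · exact (continuousOn_arcosh.comp continuous_exp.continuousOn
      fun y hy => one_le_exp (mem_Ici.1 hy)).pow 2
  · rw [interior_Ici]
    intro y hy z hz hyz
    have hy' : 1 < exp y := one_lt_exp_iff.2 hy
    have hz' : 1 < exp z := one_lt_exp_iff.2 hz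
    simp only [(hasDerivAt_sq_arcosh_exp hy).deriv, (hasDerivAt_sq_arcosh_exp hz).deriv]
    gcongr 2 * ?_
    exact strictMonoOn_mul_cosh_div_sinh (arcosh_pos hy') (arcosh_pos hz')
      ((arcosh_lt_arcosh (by positivity) (by positivity)).2 (exp_lt_exp.2 hyz))

theorem StrictConvexOn.map_add_sub_map_lt {𝕜 : Type*} [Field 𝕜] [LinearOrder 𝕜]
    [IsStrictOrderedRing 𝕜] {s : Set 𝕜} {f : 𝕜 → 𝕜} (hf : StrictConvexOn 𝕜 s f) {x y a : 𝕜}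
    (hx : x ∈ s) (hya : y + a ∈ s) (hxy : x < y) (ha : 0 < a) :
    f (x + a) - f x < f (y + a) - f y := by
  -- both `x + a` and `y` are proper convex combinations of `x` and `y + a`
  set t := a / (y + a - x)
  have hlen : 0 < y + a - x := by linarith
  have ht : 0 < t := div_pos ha hlen
  have ht' : 0 < 1 - t := by rw [sub_pos, div_lt_one hlen]; linarith
  have hne : x ≠ y + a := by intro h; linarith
  have h₁ := hf.2 hx hya hne ht' ht (by ring)
  have h₂ := hf.2 hx hya hne ht ht' (by ring)
  have e₁ : (1 - t) • x + t • (y + a) = x + a := by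
    simp only [smul_eq_mul, t]; field_simp; ring
  have e₂ : t • x + (1 - t) • (y + a) = y := by
    simp only [smul_eq_mul, t]; field_simp; ring
  rw [e₁] at h₁
  rw [e₂] at h₂
  simp only [smul_eq_mul] at h₁ h₂
  linarith

theorem sq_arcosh_mul_cosh_sub_sq_lt {k c d : ℝ} (hk : 1 < k) (hc : 0 ≤ c) (hcd : c < d) :
    Real.arcosh (k * cosh c) ^ 2 - c ^ 2 < Real.arcosh (k * cosh d) ^ 2 - d ^ 2 := by
  have hG : ∀ t, 0 ≤ t → Real.arcosh (exp (log (cosh t))) ^ 2 = t ^ 2 := fun t ht => by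
    rw [exp_log (cosh_pos t), arcosh_cosh ht]
  have hG_shift : ∀ t, Real.arcosh (exp (log (cosh t) + log k)) = Real.arcosh (k * cosh t) :=
    fun t => by rw [exp_add, exp_log (cosh_pos t), exp_log (by linarith), mul_comm]
  have hdiff := strictConvexOn_sq_arcosh_exp.map_add_sub_map_lt
    (log_nonneg (one_le_cosh c)) (add_nonneg (log_nonneg (one_le_cosh d)) (log_nonneg hk.le))
    (log_lt_log (cosh_pos c) (cosh_strictMonoOn hc (hc.trans hcd.le) hcd)) (log_pos hk)
  simp only [hG_shift, hG c hc, hG d (hc.trans hcd.le)] at hdiff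
  exact hdiff

theorem sq_arcosh_mul_cosh_sub_sq_le {k c d : ℝ} (hk : 1 ≤ k) (hc : 0 ≤ c) (hcd : c ≤ d) :
    Real.arcosh (k * cosh c) ^ 2 - c ^ 2 ≤ Real.arcosh (k * cosh d) ^ 2 - d ^ 2 := by
  rcases hk.eq_or_lt with rfl | hk
  · simp only [one_mul, arcosh_cosh hc, arcosh_cosh (hc.trans hcd), sub_self, le_refl]
  rcases hcd.eq_or_lt with rfl | hcd
  · exact le_rfl
  exact (sq_arcosh_mul_cosh_sub_sq_lt hk hc hcd).le

theorem cosh_sqrt_sq_arcosh_mul_cosh_add_sq_le {k c s : ℝ} (hk : 1 ≤ k) (hc : 0 ≤ c) :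
    cosh √(Real.arcosh (k * cosh c) ^ 2 + s ^ 2) ≤ k * cosh √(c ^ 2 + s ^ 2) := by
  set d := √(c ^ 2 + s ^ 2)
  have hd_sq : d ^ 2 = c ^ 2 + s ^ 2 := sq_sqrt (by positivity)
  have hkd : 1 ≤ k * cosh d := one_le_mul_of_one_le_of_one_le hk (one_le_cosh d)
  have hB : 0 ≤ Real.arcosh (k * cosh d) := arcosh_nonneg hkd
  have key := sq_arcosh_mul_cosh_sub_sq_le hk hc (le_sqrt_of_sq_le (by nlinarith) : c ≤ d)
  calc cosh √(Real.arcosh (k * cosh c) ^ 2 + s ^ 2) ≤ cosh (Real.arcosh (k * cosh d)) :=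
        cosh_strictMonoOn.monotoneOn (sqrt_nonneg _) hB ((sqrt_le_left hB).2 (by linarith))
    _ = k * cosh d := cosh_arcosh hkd

theorem cosh_sqrt_sq_arcosh_mul_cosh_add_sq_lt {k c s : ℝ} (hk : 1 < k) (hc : 0 ≤ c)
    (hs : s ≠ 0) :
    cosh √(Real.arcosh (k * cosh c) ^ 2 + s ^ 2) < k * cosh √(c ^ 2 + s ^ 2) := by
  set d := √(c ^ 2 + s ^ 2)
  have hd_sq : d ^ 2 = c ^ 2 + s ^ 2 := sq_sqrt (by positivity)
  have hcd : c < d := lt_sqrt_of_sq_lt (lt_add_of_pos_right _ (by positivity))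
  have hkd : 1 < k * cosh d := one_lt_mul_of_lt_of_le hk (one_le_cosh d)
  have hB : 0 < Real.arcosh (k * cosh d) := arcosh_pos hkd
  have key := sq_arcosh_mul_cosh_sub_sq_lt hk hc hcd
  calc cosh √(Real.arcosh (k * cosh c) ^ 2 + s ^ 2) < cosh (Real.arcosh (k * cosh d)) :=
        cosh_strictMonoOn (sqrt_nonneg _) hB.le ((sqrt_lt' hB).2 (by linarith))
    _ = k * cosh d := cosh_arcosh hkd.le

end

theorem product_distance_and_hypotenuse :
    (∀ (x y : ℍ) (a b : ℝ),
      dist ((WithLp.equiv 2 (ℍ × ℝ)).symm (x, a)) ((WithLp.equiv 2 (ℍ × ℝ)).symm (y, b))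
        = Real.sqrt (dist x y ^ 2 + (a - b) ^ 2)) ∧
    (∀ l d α : ℝ, 0 ≤ l → 0 ≤ d → 0 ≤ α → α ≤ Real.pi / 2 →
      Real.cosh (Real.sqrt ((arcosh (Real.cosh l * Real.cosh (d * Real.cos α))) ^ 2
          + (d * Real.sin α) ^ 2)) ≤ Real.cosh l * Real.cosh d ∧
      (0 < Real.sin α → 0 < d → 0 < l →
        Real.cosh (Real.sqrt ((arcosh (Real.cosh l * Real.cosh (d * Real.cos α))) ^ 2
          + (d * Real.sin α) ^ 2)) < Real.cosh l * Real.cosh d)) := by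
  refine ⟨fun x y a b => ?_, fun l d α _ hd hα hα' => ?_⟩
  · rw [WithLp.prod_dist_eq_sqrt, Real.dist_eq, sq_abs]
    rfl
  have hc : 0 ≤ d * Real.cos α :=
    mul_nonneg hd (Real.cos_nonneg_of_mem_Icc ⟨by linarith [Real.pi_pos], hα'⟩)
  have hd_eq : √((d * Real.cos α) ^ 2 + (d * Real.sin α) ^ 2) = d := by
    rw [mul_pow, mul_pow, ← mul_add, Real.cos_sq_add_sin_sq, mul_one, Real.sqrt_sq hd]
  rw [arcosh_eq_real_arcosh]
  refine ⟨?_, fun hsin hd_pos hl_pos => ?_⟩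
  · simpa only [hd_eq] using
      cosh_sqrt_sq_arcosh_mul_cosh_add_sq_le (s := d * Real.sin α) (Real.one_le_cosh l) hc
  · simpa only [hd_eq] using cosh_sqrt_sq_arcosh_mul_cosh_add_sq_lt
      (Real.one_lt_cosh.2 hl_pos.ne') hc (mul_pos hd_pos hsin).ne'
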